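/- Let K ⊂ ℝ² be a nondegenerate triangle with vertices a₁, a₂, a₃, area |K|, and edge vectors ℓ₁ = a₃ − a₂, ℓ₂ = a₁ − a₃, ℓ₃ = a₂ − a₁. Let u : ℝ² → ℝ be a quadratic polynomial with constant Hessian H, u_I its linear interpolant at the vertices, and d_i = ℓ_i · (H ℓ_i). Then ∫_K (u − u_I)(x) dx = −(|K|/24) · (d₁ + d₂ + d₃). -/

import Mathlib

/-!
In barycentric coordinates `λ` on `K`, the interpolation error of a quadratic `u` is
`u - u_I = -½ ∑ᵢ λᵢ₊₁ λᵢ₊₂ dᵢ`: the affine part of `u` is reproduced exactly, and the quadratic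
part `Q` satisfies `Q (∑ λᵢ aᵢ) = ∑ λᵢ Q aᵢ - ½ ∑_{i<j} λᵢ λⱼ Q (aᵢ - aⱼ)`. Pulling back along
`y ↦ a₀ + y₀ (a₁ - a₀) + y₁ (a₂ - a₀)` to the reference triangle (area `1/2`), each product
`λⱼ λₖ` with `j ≠ k` integrates to `1/24`, i.e. to `|K|/12` on `K`.
-/

open MeasureTheory RealInnerProductSpace

/-- The bilinear form `v ⬝ (H w)` induced by a `2 × 2` real matrix `H` on `ℝ²`. -/
noncomputable def matBilin (H : Matrix (Fin 2) (Fin 2) ℝ)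
    (v w : EuclideanSpace ℝ (Fin 2)) : ℝ :=
  ∑ i : Fin 2, ∑ j : Fin 2, v i * H i j * w j

open Set Function

theorem intervalIntegral_cubic (c₀ c₁ c₂ c₃ r : ℝ) :
    ∫ y in (0 : ℝ)..r, (c₀ + c₁ * y + c₂ * y ^ 2 + c₃ * y ^ 3) =
      c₀ * r + c₁ * r ^ 2 / 2 + c₂ * r ^ 3 / 3 + c₃ * r ^ 4 / 4 := by
  have hderiv : ∀ y ∈ uIcc (0 : ℝ) r, HasDerivAt
      (fun y => c₀ * y + c₁ * y ^ 2 / 2 + c₂ * y ^ 3 / 3 + c₃ * y ^ 4 / 4)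
      (c₀ + c₁ * y + c₂ * y ^ 2 + c₃ * y ^ 3) y := fun y _ => by
    refine (((((hasDerivAt_id y).const_mul c₀).add
      (((hasDerivAt_pow 2 y).const_mul c₁).div_const 2)).add
      (((hasDerivAt_pow 3 y).const_mul c₂).div_const 3)).add
      (((hasDerivAt_pow 4 y).const_mul c₃).div_const 4)).congr_deriv ?_
    push_cast; ring
  rw [intervalIntegral.integral_eq_sub_of_hasDerivAt hderiv
    (Continuous.intervalIntegrable (by fun_prop) _ _)]
  ring

def unitTriangle : Set (ℝ × ℝ) := {p | 0 ≤ p.1 ∧ 0 ≤ p.2 ∧ p.1 + p.2 ≤ 1}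

theorem isClosed_unitTriangle : IsClosed unitTriangle :=
  (isClosed_le continuous_const continuous_fst).inter <|
    (isClosed_le continuous_const continuous_snd).inter <|
      isClosed_le (continuous_fst.add continuous_snd) continuous_const

theorem isCompact_unitTriangle : IsCompact unitTriangle :=
  (isCompact_Icc (a := ((0 : ℝ), (0 : ℝ))) (b := (1, 1))).of_isClosed_subset
    isClosed_unitTriangle fun _ ⟨h₁, h₂, h₃⟩ =>
      ⟨⟨h₁, h₂⟩, ⟨by linarith, by linarith⟩⟩

theorem setIntegral_unitTriangle {f : ℝ × ℝ → ℝ} (hf : Continuous f) :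
    ∫ p in unitTriangle, f p = ∫ x in (0 : ℝ)..1, ∫ y in (0 : ℝ)..(1 - x), f (x, y) := by
  have hmeas := isClosed_unitTriangle.measurableSet
  have hint : Integrable (unitTriangle.indicator f) (volume.prod volume) := by
    rw [← Measure.volume_eq_prod, integrable_indicator_iff hmeas]
    exact hf.continuousOn.integrableOn_compact isCompact_unitTriangle
  have hslice : ∀ x, ∫ y, unitTriangle.indicator f (x, y) =
      (Icc 0 1).indicator (fun x => ∫ y in (0 : ℝ)..(1 - x), f (x, y)) x := by
    intro x
    by_cases hx : x ∈ Icc (0 : ℝ) 1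
    · rw [indicator_of_mem hx, intervalIntegral.integral_of_le (by linarith [hx.2]),
        ← integral_Icc_eq_integral_Ioc, ← integral_indicator measurableSet_Icc]
      congr 1 with y
      simp only [indicator_apply, unitTriangle, mem_ofPred_eq, mem_Icc]
      congr 1
      exact propext ⟨fun ⟨_, h₂, h₃⟩ => ⟨h₂, by linarith⟩,
        fun ⟨h₂, h₃⟩ => ⟨hx.1, h₂, by linarith⟩⟩
    · rw [indicator_of_notMem hx]
      refine integral_eq_zero_of_ae (Filter.Eventually.of_forall fun y => ?_)
      refine indicator_of_notMem ?_ _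
      exact fun ⟨h₁, h₂, h₃⟩ => hx ⟨h₁, by linarith⟩
  rw [← integral_indicator hmeas, Measure.volume_eq_prod, integral_prod _ hint]
  simp_rw [hslice]
  rw [integral_indicator measurableSet_Icc, intervalIntegral.integral_of_le zero_le_one,
    integral_Icc_eq_integral_Ioc]

theorem setIntegral_unitTriangle_quadratic (c₀ c₁ c₂ c₃ c₄ c₅ : ℝ) :
    ∫ p in unitTriangle,
      (c₀ + c₁ * p.1 + c₂ * p.2 + c₃ * p.1 ^ 2 + c₄ * (p.1 * p.2) + c₅ * p.2 ^ 2) =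
      c₀ / 2 + c₁ / 6 + c₂ / 6 + c₃ / 12 + c₄ / 24 + c₅ / 12 := by
  have hinner : ∀ x : ℝ, ∫ y in (0 : ℝ)..(1 - x),
      (c₀ + c₁ * x + c₂ * y + c₃ * x ^ 2 + c₄ * (x * y) + c₅ * y ^ 2) =
      (c₀ + c₁ * x + c₃ * x ^ 2) * (1 - x) + (c₂ + c₄ * x) * (1 - x) ^ 2 / 2 +
        c₅ * (1 - x) ^ 3 / 3 + 0 * (1 - x) ^ 4 / 4 := fun x =>
    (intervalIntegral.integral_congr fun y _ => by ring).trans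
      (intervalIntegral_cubic (c₀ + c₁ * x + c₃ * x ^ 2) (c₂ + c₄ * x) c₅ 0 (1 - x))
  rw [setIntegral_unitTriangle (by fun_prop)]
  simp only [hinner]
  rw [(intervalIntegral.integral_congr fun x _ => by ring).trans
    (intervalIntegral_cubic (c₀ + c₂ / 2 + c₅ / 3) (c₁ - c₀ - c₂ + c₄ / 2 - c₅)
      (c₃ - c₁ + c₂ / 2 - c₄ + c₅) (c₄ / 2 - c₃ - c₅ / 3) 1)]
  ring

def refTriangle : Set (EuclideanSpace ℝ (Fin 2)) := {y | 0 ≤ y 0 ∧ 0 ≤ y 1 ∧ y 0 + y 1 ≤ 1}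

theorem isClosed_refTriangle : IsClosed refTriangle :=
  (isClosed_le continuous_const (EuclideanSpace.proj 0).continuous).inter <|
    (isClosed_le continuous_const (EuclideanSpace.proj 1).continuous).inter <|
      isClosed_le ((EuclideanSpace.proj 0).continuous.add (EuclideanSpace.proj 1).continuous)
        continuous_const

theorem convex_refTriangle : Convex ℝ refTriangle := by
  rintro x ⟨hx₀, hx₁, hx⟩ y ⟨hy₀, hy₁, hy⟩ s t hs ht hst
  simp only [refTriangle, mem_ofPred_eq, PiLp.add_apply, PiLp.smul_apply, smul_eq_mul]
  refine ⟨by positivity, by positivity, ?_⟩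
  nlinarith [mul_le_mul_of_nonneg_left hx hs, mul_le_mul_of_nonneg_left hy ht]

theorem setIntegral_refTriangle_quadratic (c₀ c₁ c₂ c₃ c₄ c₅ : ℝ) :
    ∫ y in refTriangle,
      (c₀ + c₁ * y 0 + c₂ * y 1 + c₃ * y 0 ^ 2 + c₄ * (y 0 * y 1) + c₅ * y 1 ^ 2) =
      c₀ / 2 + c₁ / 6 + c₂ / 6 + c₃ / 12 + c₄ / 24 + c₅ / 12 := by
  let ψ := (MeasurableEquiv.toLp 2 (Fin 2 → ℝ)).symm.trans MeasurableEquiv.finTwoArrow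
  have hψ : MeasurePreserving ψ := (volume_preserving_finTwoArrow ℝ).comp
    (EuclideanSpace.volume_preserving_symm_measurableEquiv_toLp (Fin 2))
  rw [← setIntegral_unitTriangle_quadratic]
  exact hψ.setIntegral_preimage_emb ψ.measurableEmbedding
    (fun p => c₀ + c₁ * p.1 + c₂ * p.2 + c₃ * p.1 ^ 2 + c₄ * (p.1 * p.2) + c₅ * p.2 ^ 2)
    unitTriangle

theorem measureReal_refTriangle : volume.real refTriangle = 1 / 2 := by
  simpa using setIntegral_refTriangle_quadratic 1 0 0 0 0 0

def baryWeights (y : EuclideanSpace ℝ (Fin 2)) : Fin 3 → ℝ := ![1 - y 0 - y 1, y 0, y 1]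

theorem sum_baryWeights (y : EuclideanSpace ℝ (Fin 2)) : ∑ i, baryWeights y i = 1 := by
  simp only [baryWeights, Fin.sum_univ_three, Matrix.cons_val_zero, Matrix.cons_val_one,
    Matrix.cons_val]
  ring

theorem baryWeights_nonneg {y : EuclideanSpace ℝ (Fin 2)} (hy : y ∈ refTriangle) (i : Fin 3) :
    0 ≤ baryWeights y i := by
  obtain ⟨h₀, h₁, h₂⟩ := hy
  fin_cases i <;> simp [baryWeights] <;> linarith

section Triangle

variable {V : Type*} [AddCommGroup V] [Module ℝ V]

theorem sum_baryWeights_smul (a : Fin 3 → V) (y : EuclideanSpace ℝ (Fin 2)) :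
    ∑ i, baryWeights y i • a i = a 0 + (y 0 • (a 1 - a 0) + y 1 • (a 2 - a 0)) := by
  simp only [baryWeights, Fin.sum_univ_three, Matrix.cons_val_zero, Matrix.cons_val_one,
    Matrix.cons_val]
  module

theorem convexHull_range_eq_image_refTriangle (a : Fin 3 → V) :
    convexHull ℝ (range a) = (fun y => ∑ i, baryWeights y i • a i) '' refTriangle := by
  refine Subset.antisymm (convexHull_min ?_ ?_) ?_
  · rintro _ ⟨i, rfl⟩
    fin_cases i
    · exact ⟨!₂[0, 0], by simp [refTriangle], by simp [sum_baryWeights_smul]⟩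
    · exact ⟨!₂[1, 0], by simp [refTriangle], by simp [sum_baryWeights_smul]⟩
    · exact ⟨!₂[0, 1], by simp [refTriangle], by simp [sum_baryWeights_smul]⟩
  · have hL : IsLinearMap ℝ
        fun y : EuclideanSpace ℝ (Fin 2) => y 0 • (a 1 - a 0) + y 1 • (a 2 - a 0) :=
      ⟨fun x y => by simp only [PiLp.add_apply, add_smul]; abel,
        fun c x => by simp only [PiLp.smul_apply, smul_eq_mul, mul_smul, smul_add]⟩
    simpa only [image_image, sum_baryWeights_smul] using
      (convex_refTriangle.is_linear_image hL).translate (a 0)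
  · rintro _ ⟨y, hy, rfl⟩
    exact (convex_convexHull ℝ _).sum_mem (fun i _ => baryWeights_nonneg hy i)
      (sum_baryWeights y) fun i _ => subset_convexHull ℝ _ (mem_range_self i)

theorem AffineIndependent.injective_sum_baryWeights_smul {a : Fin 3 → V}
    (ha : AffineIndependent ℝ a) : Injective fun y => ∑ i, baryWeights y i • a i := by
  intro y z h
  have hw := ha.eq_of_sum_eq_sum (s := Finset.univ)
    (by rw [sum_baryWeights, sum_baryWeights]) h
  ext i
  fin_cases i
  · exact hw 1 (Finset.mem_univ _)
  · exact hw 2 (Finset.mem_univ _)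

end Triangle

theorem AffineMap.apply_sum_smul {ι k V W : Type*} [Fintype ι] [Ring k] [AddCommGroup V]
    [Module k V] [AddCommGroup W] [Module k W] (f : V →ᵃ[k] W) {w : ι → k}
    (hw : ∑ i, w i = 1) (p : ι → V) : f (∑ i, w i • p i) = ∑ i, w i • f (p i) := by
  rw [← Finset.affineCombination_eq_linear_combination _ _ _ hw,
    Finset.univ.map_affineCombination p w hw f,
    Finset.affineCombination_eq_linear_combination _ _ _ hw]
  rfl

theorem setIntegral_image_const_add_clm {E F : Type*} [NormedAddCommGroup E]
    [NormedSpace ℝ E] [FiniteDimensional ℝ E] [MeasurableSpace E] [BorelSpace E]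
    (μ : Measure E) [μ.IsAddHaarMeasure] [NormedAddCommGroup F] [NormedSpace ℝ F]
    (p : E) (A : E →L[ℝ] E) {s : Set E} (hs : MeasurableSet s)
    (hinj : InjOn (fun y => p + A y) s) (g : E → F) :
    ∫ x in (fun y => p + A y) '' s, g x ∂μ = |A.det| • ∫ y in s, g (p + A y) ∂μ := by
  rw [integral_image_eq_integral_abs_det_fderiv_smul μ hs
    (fun x _ => (A.hasFDerivAt.const_add p).hasFDerivWithinAt) hinj, integral_smul]

theorem matBilin_apply_fin_two (H : Matrix (Fin 2) (Fin 2) ℝ) (v w : EuclideanSpace ℝ (Fin 2)) :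
    matBilin H v w =
      v 0 * H 0 0 * w 0 + v 0 * H 0 1 * w 1 + v 1 * H 1 0 * w 0 + v 1 * H 1 1 * w 1 := by
  simp only [matBilin, Fin.sum_univ_two]
  ring

theorem quadratic_apply_sum_smul {H : Matrix (Fin 2) (Fin 2) ℝ} {b : EuclideanSpace ℝ (Fin 2)}
    {c : ℝ} {u : EuclideanSpace ℝ (Fin 2) → ℝ}
    (hu : ∀ x, u x = (1 / 2) * matBilin H x x + ⟪b, x⟫ + c)
    (p : Fin 3 → EuclideanSpace ℝ (Fin 2)) {w : Fin 3 → ℝ} (hw : ∑ i, w i = 1) :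
    u (∑ i, w i • p i) = ∑ i, w i * u (p i) -
      (1 / 2) * ∑ i, w (i + 1) * w (i + 2) *
        matBilin H (p (i + 2) - p (i + 1)) (p (i + 2) - p (i + 1)) := by
  rw [Fin.sum_univ_three] at hw
  have hw₀ : w 0 = 1 - w 1 - w 2 := by linarith
  simp only [hu, matBilin_apply_fin_two, EuclideanSpace.inner_eq_star_dotProduct,
    Fin.sum_univ_three, one_div, PiLp.add_apply, PiLp.smul_apply, smul_eq_mul, dotProduct,
    Pi.star_apply, star_trivial, Fin.sum_univ_two, zero_add, PiLp.sub_apply, Fin.reduceAdd]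
  rw [hw₀]
  ring

theorem quadratic_sub_interp_apply_sum_smul {H : Matrix (Fin 2) (Fin 2) ℝ}
    {b : EuclideanSpace ℝ (Fin 2)} {c : ℝ} {u : EuclideanSpace ℝ (Fin 2) → ℝ}
    (hu : ∀ x, u x = (1 / 2) * matBilin H x x + ⟪b, x⟫ + c)
    (uI : EuclideanSpace ℝ (Fin 2) →ᵃ[ℝ] ℝ) {a : Fin 3 → EuclideanSpace ℝ (Fin 2)}
    (hI : ∀ i, uI (a i) = u (a i)) {w : Fin 3 → ℝ} (hw : ∑ i, w i = 1) :
    u (∑ i, w i • a i) - uI (∑ i, w i • a i) = -(1 / 2) * ∑ i, w (i + 1) * w (i + 2) *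
      matBilin H (a (i + 2) - a (i + 1)) (a (i + 2) - a (i + 1)) := by
  rw [uI.apply_sum_smul hw, quadratic_apply_sum_smul hu a hw]
  simp only [hI, smul_eq_mul]
  ring

theorem integral_interp_error_general
    (a : Fin 3 → EuclideanSpace ℝ (Fin 2))
    (hind : AffineIndependent ℝ a)
    (K : Set (EuclideanSpace ℝ (Fin 2)))
    (hK : K = convexHull ℝ (Set.range a))
    (H : Matrix (Fin 2) (Fin 2) ℝ)
    (b : EuclideanSpace ℝ (Fin 2)) (c : ℝ)
    (u : EuclideanSpace ℝ (Fin 2) → ℝ)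
    (hu : ∀ x, u x = (1 / 2) * matBilin H x x + ⟪b, x⟫ + c)
    (uI : EuclideanSpace ℝ (Fin 2) →ᵃ[ℝ] ℝ)
    (hI : ∀ i, uI (a i) = u (a i))
    (ℓ : Fin 3 → EuclideanSpace ℝ (Fin 2))
    (hℓ : ∀ i, ℓ i = a (i + 2) - a (i + 1))
    (d : Fin 3 → ℝ)
    (hd : ∀ i, d i = matBilin H (ℓ i) (ℓ i)) :
    ∫ x in K, (u x - uI x) =
      -((volume K).toReal / 24) * (d 0 + d 1 + d 2) := by
  let A : EuclideanSpace ℝ (Fin 2) →L[ℝ] EuclideanSpace ℝ (Fin 2) :=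
    (EuclideanSpace.proj 0).smulRight (a 1 - a 0) +
      (EuclideanSpace.proj 1).smulRight (a 2 - a 0)
  have hφ : (fun y => a 0 + A y) = fun y => ∑ i, baryWeights y i • a i :=
    funext fun y => (sum_baryWeights_smul a y).symm
  have hKφ : K = (fun y => a 0 + A y) '' refTriangle := by
    rw [hK, hφ, convexHull_range_eq_image_refTriangle]
  have hinj : InjOn (fun y => a 0 + A y) refTriangle := by
    rw [hφ]; exact hind.injective_sum_baryWeights_smul.injOn
  have hvol : (volume K).toReal = |A.det| / 2 := by
    have h := setIntegral_image_const_add_clm volume (a 0) A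
      isClosed_refTriangle.measurableSet hinj fun _ => (1 : ℝ)
    rw [← hKφ] at h
    show volume.real K = _
    simpa [measureReal_refTriangle, div_eq_mul_inv] using h
  -- `-½ (d₀ λ₁λ₂ + d₁ λ₂λ₀ + d₂ λ₀λ₁)` with `λ = baryWeights y`, expanded in `y`
  have herr : ∀ y, u (a 0 + A y) - uI (a 0 + A y) =
      0 + (-d 2 / 2) * y 0 + (-d 1 / 2) * y 1 + d 2 / 2 * y 0 ^ 2 +
        (d 1 + d 2 - d 0) / 2 * (y 0 * y 1) + d 1 / 2 * y 1 ^ 2 := by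
    intro y
    rw [congrFun hφ y, quadratic_sub_interp_apply_sum_smul hu uI hI (sum_baryWeights y)]
    simp only [← hℓ, ← hd, Fin.sum_univ_three, baryWeights, Matrix.cons_val_zero,
      Matrix.cons_val_one, Matrix.cons_val, Fin.reduceAdd]
    ring
  rw [hvol, hKφ,
    setIntegral_image_const_add_clm volume (a 0) A isClosed_refTriangle.measurableSet hinj]
  simp only [herr, setIntegral_refTriangle_quadratic]
  ring

/-- Integral of the interpolation error: for a quadratic `u` with constant Hessian `H`
and its linear interpolant `u_I` on a nondegenerate triangle `K`, with
`dᵢ = ℓᵢ · (H ℓᵢ)`, one has `∫_K (u − u_I) = −(|K|/24)(d₁ + d₂ + d₃)`. -/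
theorem integral_interp_error
    (a : Fin 3 → EuclideanSpace ℝ (Fin 2))
    (hind : AffineIndependent ℝ a)
    (K : Set (EuclideanSpace ℝ (Fin 2)))
    (hK : K = convexHull ℝ (Set.range a))
    (H : Matrix (Fin 2) (Fin 2) ℝ) (hH : H.IsSymm)
    (b : EuclideanSpace ℝ (Fin 2)) (c : ℝ)
    (u : EuclideanSpace ℝ (Fin 2) → ℝ)
    (hu : ∀ x, u x = (1 / 2) * matBilin H x x + ⟪b, x⟫ + c)
    (uI : EuclideanSpace ℝ (Fin 2) →ᵃ[ℝ] ℝ)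
    (hI : ∀ i, uI (a i) = u (a i))
    (ℓ : Fin 3 → EuclideanSpace ℝ (Fin 2))
    (hℓ : ∀ i, ℓ i = a (i + 2) - a (i + 1))
    (d : Fin 3 → ℝ)
    (hd : ∀ i, d i = matBilin H (ℓ i) (ℓ i)) :
    ∫ x in K, (u x - uI x) =
      -((volume K).toReal / 24) * (d 0 + d 1 + d 2) :=
  integral_interp_error_general a hind K hK H b c u hu uI hI ℓ hℓ d hd
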